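/- arXiv:2106.09580 — 3 statements merged into one kernel-verified Lean document; each statement's English description precedes it below -/
import Mathlib

section
/- For every real ρ > 1 there exists a setting (a number of players k, positive integer sample counts n_1,…,n_k, and parameters μ_e > 0, σ² > 0) and a partition Π of the players such that costw(Π_grand) > ρ·costw(Π), where Π_grand is the partition consisting of the single grand coalition of all players; hence federating in the grand coalition can have cost more than ρ times the optimal (minimum) cost. -/
open Finset

variable {ι : Type*}

/-- The expected error of player `j` in coalition `C`. -/
noncomputable def err [DecidableEq ι] (μ σ2 : ℝ) (n : ι → ℕ) (C : Finset ι) (j : ι) : ℝ :=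
  μ / (∑ i ∈ C, (n i : ℝ)) +
    σ2 * ((∑ i ∈ C.erase j, (n i : ℝ) ^ 2) + (∑ i ∈ C.erase j, (n i : ℝ)) ^ 2) /
      (∑ i ∈ C, (n i : ℝ)) ^ 2

/-- The weighted cost of a coalition `C`. -/
noncomputable def costw [DecidableEq ι] (μ σ2 : ℝ) (n : ι → ℕ) (C : Finset ι) : ℝ :=
  ∑ j ∈ C, (n j : ℝ) * err μ σ2 n C j

/-- The total cost of a partition of the players into coalitions. -/
noncomputable def costP [DecidableEq ι] [Fintype ι] (μ σ2 : ℝ) (n : ι → ℕ)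
    (P : Finpartition (Finset.univ : Finset ι)) : ℝ :=
  ∑ C ∈ P.parts, costw μ σ2 n C

/-! Going it alone costs every player exactly `μ`, whereas in a coalition of `m` players with
one sample each the variance term adds `σ² (m - 1)`. Already for two such players, taking
`μ = 1` and `σ² = 2ρ` makes the grand coalition cost `1 + 2ρ` against `2` for the partition into
singletons. -/

section

variable [DecidableEq ι]

theorem costw_singleton (μ σ2 : ℝ) {n : ι → ℕ} {j : ι} (hj : n j ≠ 0) :
    costw μ σ2 n {j} = μ := by
  have hj' : (n j : ℝ) ≠ 0 := Nat.cast_ne_zero.mpr hj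
  simp only [costw, err, sum_singleton, erase_singleton, sum_empty]
  field_simp
  ring

theorem costP_bot [Fintype ι] (μ σ2 : ℝ) {n : ι → ℕ} (hn : ∀ i, n i ≠ 0) :
    costP μ σ2 n ⊥ = Fintype.card ι * μ := by
  simp only [costP, Finpartition.parts_bot, sum_map, Function.Embedding.coeFn_mk,
    costw_singleton μ σ2 (hn _), sum_const, card_univ, nsmul_eq_mul]

theorem costw_of_unit_samples (μ σ2 : ℝ) {C : Finset ι} (hC : C.Nonempty) :
    costw μ σ2 (fun _ => 1) C = μ + σ2 * (#C - 1) := by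
  have hm : (#C : ℝ) ≠ 0 := Nat.cast_ne_zero.mpr hC.card_ne_zero
  have herr : ∀ j ∈ C, err μ σ2 (fun _ => 1) C j = μ / #C + σ2 * (#C - 1) / #C := by
    intro j hj
    simp only [err, Nat.cast_one, one_pow, sum_const, nsmul_eq_mul, mul_one,
      card_erase_of_mem hj, Nat.cast_sub (card_pos.mpr hC), Nat.cast_one]
    field_simp
    ring
  rw [costw, sum_congr rfl fun j hj => by rw [herr j hj]]
  simp only [Nat.cast_one, one_mul, sum_const, nsmul_eq_mul]
  field_simp

end

/-- For every `ρ > 1` there is a setting (number of players, positive sample counts,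
parameters `μ_e > 0`, `σ² > 0`) and a partition `P` whose cost is beaten by a factor
more than `ρ` by the grand coalition: the partition consisting of the single grand
coalition of all players costs more than `ρ` times the cost of `P`.  Hence the grand
coalition can be more than `ρ` times optimal. -/
theorem grand_coalition_arbitrarily_bad (ρ : ℝ) (hρ : 1 < ρ) :
    ∃ (k : ℕ) (n : Fin k → ℕ) (μ σ2 : ℝ),
      (∀ i, 0 < n i) ∧ 0 < μ ∧ 0 < σ2 ∧
      ∃ P : Finpartition (Finset.univ : Finset (Fin k)),
        costw μ σ2 n (Finset.univ : Finset (Fin k)) > ρ * costP μ σ2 n P := by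
  refine ⟨2, fun _ => 1, 1, 2 * ρ, fun _ => one_pos, one_pos, by linarith, ⊥, ?_⟩
  rw [costw_of_unit_samples 1 (2 * ρ) Finset.univ_nonempty,
    costP_bot 1 (2 * ρ) fun _ => one_ne_zero]
  simp only [card_univ, Fintype.card_fin]
  norm_num
  linarith
end

section
/- If every player i satisfies n_i ≤ μ_e/σ², then the grand coalition N of all players is core stable: there is no nonempty proper subset S ⊂ N of players such that err_j(S) < err_j(N) for every j ∈ S. -/
/-!
Weight each player's error by its sample count. For `S ⊆ C` with `t, q` the sums of `n_i, n_i²`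
over `S` and `T, Q` those over `C`, the error `err_j(C) = μ/T + σ²(Q + T²)/T² - 2σ² n_j/T` is
affine in `n_j`, the total weighted error of `S` on its own is `μ + σ²(t - q/t)`, and it exceeds
the weighted error of the same players inside `C` by
`(μ t T (T - t) - σ² (t² (Q - q) + q (T - t)²)) / (t T²)`.
The numerator is nonnegative once `σ² n_i ≤ μ` for all players, since then `σ² q ≤ μ t` and
`σ² (Q - q) ≤ μ (T - t)`. So a blocking coalition, whose members all strictly gain, cannot exist.
-/

open Finset

variable {ι : Type*}

lemma mul_sum_sq_le_mul_sum {A : Finset ι} {f : ι → ℝ} {μ σ2 : ℝ}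
    (hf : ∀ i ∈ A, 0 ≤ f i) (hsmall : ∀ i ∈ A, σ2 * f i ≤ μ) :
    σ2 * ∑ i ∈ A, f i ^ 2 ≤ μ * ∑ i ∈ A, f i := by
  rw [mul_sum, mul_sum]
  refine sum_le_sum fun i hi => ?_
  calc σ2 * f i ^ 2 = (σ2 * f i) * f i := by ring
    _ ≤ μ * f i := mul_le_mul_of_nonneg_right (hsmall i hi) (hf i hi)

section Errors

variable [DecidableEq ι] (μ σ2 : ℝ) (n : ι → ℕ)

lemma err_eq_of_mem {C : Finset ι} {j : ι} (hj : j ∈ C) :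
    err μ σ2 n C j =
      μ / (∑ i ∈ C, (n i : ℝ)) +
        σ2 * ((∑ i ∈ C, (n i : ℝ) ^ 2) + (∑ i ∈ C, (n i : ℝ)) ^ 2) / (∑ i ∈ C, (n i : ℝ)) ^ 2 -
          2 * σ2 * n j / ∑ i ∈ C, (n i : ℝ) := by
  rw [err, sum_erase_eq_sub hj, sum_erase_eq_sub hj]
  rcases eq_or_ne (∑ i ∈ C, (n i : ℝ)) 0 with hT | hT
  · simp [hT]
  · field_simp
    ring

lemma sum_mul_err_eq {S C : Finset ι} (hSC : S ⊆ C) :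
    ∑ j ∈ S, (n j : ℝ) * err μ σ2 n C j =
      (∑ i ∈ S, (n i : ℝ)) * (μ / (∑ i ∈ C, (n i : ℝ)) +
        σ2 * ((∑ i ∈ C, (n i : ℝ) ^ 2) + (∑ i ∈ C, (n i : ℝ)) ^ 2) / (∑ i ∈ C, (n i : ℝ)) ^ 2) -
          2 * σ2 * (∑ i ∈ S, (n i : ℝ) ^ 2) / ∑ i ∈ C, (n i : ℝ) := by
  rw [sum_congr rfl fun j hj => by rw [err_eq_of_mem μ σ2 n (hSC hj)]]
  simp only [mul_sub, mul_add, sum_sub_distrib, sum_add_distrib, ← sum_mul, mul_sum, sum_div]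
  refine congrArg₂ _ (by ring) (sum_congr rfl fun j _ => by ring)

lemma costw_eq {S : Finset ι} (hS : ∑ i ∈ S, (n i : ℝ) ≠ 0) :
    costw μ σ2 n S =
      μ + σ2 * (∑ i ∈ S, (n i : ℝ) - (∑ i ∈ S, (n i : ℝ) ^ 2) / ∑ i ∈ S, (n i : ℝ)) := by
  rw [costw, sum_mul_err_eq μ σ2 n subset_rfl]
  field_simp
  ring

lemma sum_mul_err_le_costw {S C : Finset ι} (hSC : S ⊆ C) (hS : S.Nonempty)
    (hn : ∀ i ∈ S, 0 < n i) (hsmall : ∀ i ∈ C, σ2 * n i ≤ μ) :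
    ∑ j ∈ S, (n j : ℝ) * err μ σ2 n C j ≤ costw μ σ2 n S := by
  have hcast (i : ι) : (0 : ℝ) ≤ n i := Nat.cast_nonneg _
  have ht : 0 < ∑ i ∈ S, (n i : ℝ) := sum_pos (fun i hi => by exact_mod_cast hn i hi) hS
  rw [← sub_nonneg, costw_eq μ σ2 n ht.ne', sum_mul_err_eq μ σ2 n hSC]
  set t := ∑ i ∈ S, (n i : ℝ)
  set T := ∑ i ∈ C, (n i : ℝ)
  set q := ∑ i ∈ S, (n i : ℝ) ^ 2
  set Q := ∑ i ∈ C, (n i : ℝ) ^ 2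
  have htT : t ≤ T := sum_le_sum_of_subset_of_nonneg hSC fun i _ _ => hcast i
  have hT : 0 < T := ht.trans_le htT
  have hq : σ2 * q ≤ μ * t :=
    mul_sum_sq_le_mul_sum (fun i _ => hcast i) fun i hi => hsmall i (hSC hi)
  have hQq : σ2 * (Q - q) ≤ μ * (T - t) := by
    rw [← sum_sdiff_eq_sub hSC, ← sum_sdiff_eq_sub hSC]
    exact mul_sum_sq_le_mul_sum (fun i _ => hcast i)
      fun i hi => hsmall i (sdiff_subset hi)
  -- weighting the two bounds by `t²` and `(T - t)²` gives `μ t (T - t) (t + (T - t))`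
  have hgap : σ2 * (t ^ 2 * (Q - q) + q * (T - t) ^ 2) ≤ μ * t * T * (T - t) := by
    nlinarith [mul_le_mul_of_nonneg_left hQq (sq_nonneg t),
      mul_le_mul_of_nonneg_left hq (sq_nonneg (T - t))]
  refine (div_nonneg (sub_nonneg.2 hgap) (by positivity : (0 : ℝ) ≤ t * T ^ 2)).trans_eq ?_
  field_simp
  ring

end Errors

theorem grand_coalition_core_stable_general [DecidableEq ι] [Fintype ι] (μ σ2 : ℝ) (n : ι → ℕ)
    (hσ : 0 < σ2) (hn : ∀ i, 0 < n i)
    (hsmall : ∀ i, (n i : ℝ) ≤ μ / σ2) :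
    ¬ ∃ S : Finset ι, S.Nonempty ∧ S ⊂ Finset.univ ∧
        ∀ j ∈ S, err μ σ2 n S j < err μ σ2 n Finset.univ j := by
  rintro ⟨S, hS, -, hblock⟩
  have hgain : costw μ σ2 n S < ∑ j ∈ S, (n j : ℝ) * err μ σ2 n univ j :=
    sum_lt_sum_of_nonempty hS fun j hj =>
      mul_lt_mul_of_pos_left (hblock j hj) (Nat.cast_pos.2 (hn j))
  have hno_gain := sum_mul_err_le_costw μ σ2 n (subset_univ S) hS (fun i _ => hn i)
    fun i _ => by rw [mul_comm, ← le_div_iff₀ hσ]; exact hsmall i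
  exact hgain.not_ge hno_gain

/-- If every player `i` satisfies `n_i ≤ μ_e/σ²`, then the grand coalition of all
players is core stable: there is no nonempty proper subset `S` of the players such that
every member of `S` has strictly smaller error in `S` than in the grand coalition. -/
theorem grand_coalition_core_stable [DecidableEq ι] [Fintype ι] (μ σ2 : ℝ) (n : ι → ℕ)
    (hμ : 0 < μ) (hσ : 0 < σ2) (hn : ∀ i, 0 < n i)
    (hsmall : ∀ i, (n i : ℝ) ≤ μ / σ2) :
    ¬ ∃ S : Finset ι, S.Nonempty ∧ S ⊂ Finset.univ ∧
        ∀ j ∈ S, err μ σ2 n S j < err μ σ2 n Finset.univ j :=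
  grand_coalition_core_stable_general μ σ2 n hσ hn hsmall
end

section
/- Let A and B be disjoint nonempty coalitions in which every player has at most μ_e/(3σ²) samples, and let a ∈ A, b ∈ B. If either n_a = n_b, or n_a > n_b and T_A − n_a ≥ T_B − n_b, then some player wishes to switch: err_a(B ∪ {a}) < err_a(A) or err_b(A ∪ {b}) < err_b(B). Consequently (by the welcoming lemma) no partition containing both A and B as coalitions is individually stable. -/
/-! Write `k = μ/(3σ²)`. Adding a player with at most `k` samples never hurts a member with at
most `k` samples, so any player who strictly gains from moving breaks individual stability.
Suppose neither `a` nor `b` gains. Cleared of denominators, the two failures are polynomial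
inequalities in which the sum of squares of `A ∖ {a}` appears on opposite sides; a suitable
weighted sum eliminates it, and the sum of squares `v` of `B ∖ {b}` then enters with a
nonpositive coefficient, so `v` may be replaced by its lower bound `T_B - n_b`. The resulting
polynomial inequality in five variables is false. -/

open Finset

variable {ι : Type*}

def IndividuallyStable [DecidableEq ι] [Fintype ι] (μ σ2 : ℝ) (n : ι → ℕ)
    (P : Finpartition (Finset.univ : Finset ι)) : Prop :=
  ∀ i : ι, ∀ Ci ∈ P.parts, i ∈ Ci →
    (¬ err μ σ2 n {i} i < err μ σ2 n Ci i) ∧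
    ∀ C ∈ P.parts, C ≠ Ci →
      ¬ (err μ σ2 n (insert i C) i < err μ σ2 n Ci i ∧
         ∀ j ∈ C, err μ σ2 n (insert i C) j ≤ err μ σ2 n C j)

/-- The error of a player with `m` samples whose partners hold `S` samples in total, with sum of
squares `Q`. -/
noncomputable def errWith (μ σ2 m S Q : ℝ) : ℝ :=
  μ / (m + S) + σ2 * (Q + S ^ 2) / (m + S) ^ 2

section RealInequalities

variable {σ2 k : ℝ}

theorem errWith_le_errWith_iff (hσ : 0 < σ2) {m S Q m' S' Q' : ℝ} (hT : 0 < m + S)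
    (hT' : 0 < m' + S') :
    errWith (3 * σ2 * k) σ2 m S Q ≤ errWith (3 * σ2 * k) σ2 m' S' Q' ↔
      (3 * k * (m + S) + (Q + S ^ 2)) * (m' + S') ^ 2 ≤
        (3 * k * (m' + S') + (Q' + S' ^ 2)) * (m + S) ^ 2 := by
  have key : ∀ T N : ℝ, 0 < T →
      3 * σ2 * k / T + σ2 * N / T ^ 2 = σ2 * ((3 * k * T + N) / T ^ 2) := by
    intro T N hT
    field_simp
  rw [errWith, errWith, key _ _ hT, key _ _ hT', mul_le_mul_iff_of_pos_left hσ,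
    div_le_div_iff₀ (by positivity) (by positivity)]

theorem errWith_add_le (hσ : 0 < σ2) {m S Q z : ℝ} (hm : 0 < m) (hmk : m ≤ k) (hS : 0 ≤ S)
    (hQ : 0 ≤ Q) (hz : 0 ≤ z) (hzk : z ≤ k) :
    errWith (3 * σ2 * k) σ2 m (z + S) (z ^ 2 + Q) ≤ errWith (3 * σ2 * k) σ2 m S Q := by
  rw [errWith_le_errWith_iff hσ (by linarith) (by linarith)]
  set M := m + S
  have hM0 : 0 ≤ M := by positivity
  have hk : 0 ≤ k := by linarith
  have hM : m + (z + S) = M + z := by ring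
  -- the difference of the two sides is `z` times this nonnegative quantity
  have key :
      m * (2 * S * M + S * z + z * M) + z * M ^ 2 ≤ 3 * k * M * (M + z) + Q * (2 * M + z) := by
    nlinarith [mul_le_mul_of_nonneg_right hmk (by positivity : 0 ≤ 2 * S * M + S * z + z * M),
      mul_le_mul_of_nonneg_right hzk (by positivity : 0 ≤ M ^ 2),
      mul_nonneg (mul_nonneg hk hM0) hz, mul_nonneg hQ (by positivity : 0 ≤ 2 * M + z)]
  rw [hM]
  nlinarith [mul_le_mul_of_nonneg_left key hz]

set_option maxRecDepth 10000 in
theorem switch_polynomial_lt {x y s t : ℝ} (hy : 1 ≤ y) (hyx : y ≤ x) (hxk : x ≤ k) (ht : 0 ≤ t)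
    (hts : t ≤ s) :
    (3 * k * (x + y + t) + y ^ 2 + t + (y + t) ^ 2) * (x + s) ^ 2 * (y + t) ^ 2 +
        (3 * k * (x + y + s) + x ^ 2 + (x + s) ^ 2) * (y + t) ^ 2 * (x + y + t) ^ 2 <
      (3 * k * (x + s) + s ^ 2) * (x + y + t) ^ 2 * (y + t) ^ 2 +
        (3 * k * (y + t) + t + t ^ 2) * (x + y + s) ^ 2 * (x + y + t) ^ 2 := by
  -- after writing each variable as its lower bound plus a gap, every coefficient is positive
  obtain ⟨d, hd, rfl⟩ : ∃ d, 0 ≤ d ∧ s = t + d := ⟨s - t, by linarith, by ring⟩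
  obtain ⟨a, ha, rfl⟩ : ∃ a, 0 ≤ a ∧ k = x + a := ⟨k - x, by linarith, by ring⟩
  obtain ⟨b, hb, rfl⟩ : ∃ b, 0 ≤ b ∧ x = y + b := ⟨x - y, by linarith, by ring⟩
  obtain ⟨c, hc, rfl⟩ : ∃ c, 0 ≤ c ∧ y = 1 + c := ⟨y - 1, by linarith, by ring⟩
  rw [← sub_pos]
  ring_nf
  positivity

theorem errWith_lt_or_errWith_lt (hσ : 0 < σ2) {x y s t u v : ℝ} (hy : 1 ≤ y) (hyx : y ≤ x)
    (hxk : x ≤ k) (ht : 0 ≤ t) (hts : t ≤ s) (htv : t ≤ v) :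
    errWith (3 * σ2 * k) σ2 x (y + t) (y ^ 2 + v) < errWith (3 * σ2 * k) σ2 x s u ∨
      errWith (3 * σ2 * k) σ2 y (x + s) (x ^ 2 + u) < errWith (3 * σ2 * k) σ2 y t v := by
  by_contra! h
  obtain ⟨ha, hb⟩ := h
  rw [errWith_le_errWith_iff hσ (by linarith) (by linarith)] at ha hb
  have hprod : (x + s) * (y + t) ≤ (x + (y + s)) * (x + (y + t)) := by
    apply mul_le_mul <;> linarith
  have hcoef : ((x + s) * (y + t)) ^ 2 ≤ ((x + (y + s)) * (x + (y + t))) ^ 2 :=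
    pow_le_pow_left₀ (mul_nonneg (by linarith) (by linarith)) hprod 2
  -- weights `(y+t)²` and `(x+y+t)²` cancel `u`; `v` then enters with a nonpositive coefficient
  nlinarith [switch_polynomial_lt hy hyx hxk ht hts,
    mul_le_mul_of_nonneg_left ha (sq_nonneg (y + t)),
    mul_le_mul_of_nonneg_left hb (sq_nonneg (x + (y + t))),
    mul_le_mul_of_nonneg_left hcoef (sub_nonneg.2 htv)]

end RealInequalities

section Coalitions

variable [DecidableEq ι] {μ σ2 k : ℝ} {n : ι → ℕ}

theorem err_eq_errWith {C : Finset ι} {j : ι} (hj : j ∈ C) :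
    err μ σ2 n C j =
      errWith μ σ2 (n j) (∑ i ∈ C.erase j, (n i : ℝ)) (∑ i ∈ C.erase j, (n i : ℝ) ^ 2) := by
  rw [err, errWith, ← add_sum_erase _ _ hj]

theorem err_insert_self {C : Finset ι} {z : ι} (hz : z ∉ C) :
    err μ σ2 n (insert z C) z =
      errWith μ σ2 (n z) (∑ i ∈ C, (n i : ℝ)) (∑ i ∈ C, (n i : ℝ) ^ 2) := by
  rw [err_eq_errWith (mem_insert_self z C), erase_insert hz]

theorem err_insert_of_mem {C : Finset ι} {z j : ι} (hz : z ∉ C) (hj : j ∈ C) :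
    err μ σ2 n (insert z C) j =
      errWith μ σ2 (n j) ((n z : ℝ) + ∑ i ∈ C.erase j, (n i : ℝ))
        ((n z : ℝ) ^ 2 + ∑ i ∈ C.erase j, (n i : ℝ) ^ 2) := by
  have hzj : z ∉ C.erase j := fun h => hz (mem_of_mem_erase h)
  rw [err_eq_errWith (mem_insert_of_mem hj), erase_insert_of_ne (ne_of_mem_of_not_mem hj hz).symm,
    sum_insert hzj, sum_insert hzj]

theorem err_insert_le (hσ : 0 < σ2) {C : Finset ι} {z j : ι} (hz : z ∉ C) (hj : j ∈ C)
    (hj0 : 0 < n j) (hzk : (n z : ℝ) ≤ k) (hjk : (n j : ℝ) ≤ k) :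
    err (3 * σ2 * k) σ2 n (insert z C) j ≤ err (3 * σ2 * k) σ2 n C j := by
  rw [err_insert_of_mem hz hj, err_eq_errWith hj]
  exact errWith_add_le hσ (by exact_mod_cast hj0) hjk (by positivity) (by positivity)
    (by positivity) hzk

theorem err_insert_lt_or_err_insert_lt (hσ : 0 < σ2) {A B : Finset ι} (hdisj : Disjoint A B)
    {a b : ι} (ha : a ∈ A) (hb : b ∈ B) (hb0 : 0 < n b) (hba : n b ≤ n a) (hak : (n a : ℝ) ≤ k)
    (hts : (∑ i ∈ B, (n i : ℝ)) - n b ≤ (∑ i ∈ A, (n i : ℝ)) - n a) :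
    err (3 * σ2 * k) σ2 n (insert a B) a < err (3 * σ2 * k) σ2 n A a ∨
      err (3 * σ2 * k) σ2 n (insert b A) b < err (3 * σ2 * k) σ2 n B b := by
  rw [err_insert_self (disjoint_left.mp hdisj ha), err_insert_self (disjoint_right.mp hdisj hb),
    err_eq_errWith ha, err_eq_errWith hb, ← add_sum_erase _ _ ha, ← add_sum_erase _ _ hb,
    ← add_sum_erase _ (fun i => (n i : ℝ) ^ 2) ha, ← add_sum_erase _ (fun i => (n i : ℝ) ^ 2) hb]
  rw [← sum_erase_eq_sub ha, ← sum_erase_eq_sub hb] at hts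
  refine errWith_lt_or_errWith_lt hσ (by exact_mod_cast hb0) (by exact_mod_cast hba) hak
    (by positivity) hts (sum_le_sum fun i _ => ?_)
  exact_mod_cast Nat.le_self_pow two_ne_zero (n i)

theorem not_individuallyStable_of_err_insert_lt [Fintype ι] (hσ : 0 < σ2)
    {P : Finpartition (univ : Finset ι)} {C D : Finset ι} (hC : C ∈ P.parts) (hD : D ∈ P.parts)
    {z : ι} (hzC : z ∈ C) (hzD : z ∉ D) (hzk : (n z : ℝ) ≤ k) (hDn : ∀ i ∈ D, 0 < n i)
    (hDk : ∀ i ∈ D, (n i : ℝ) ≤ k)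
    (hlt : err (3 * σ2 * k) σ2 n (insert z D) z < err (3 * σ2 * k) σ2 n C z) :
    ¬ IndividuallyStable (3 * σ2 * k) σ2 n P := fun hstab =>
  (hstab z C hC hzC).2 D hD (ne_of_mem_of_not_mem' hzC hzD).symm
    ⟨hlt, fun j hj => err_insert_le hσ hzD hj (hDn j hj) hzk (hDk j hj)⟩

end Coalitions

theorem two_small_groups_unstable_general [DecidableEq ι] [Fintype ι]
    (μ σ2 : ℝ) (n : ι → ℕ) (hσ : 0 < σ2) (hn : ∀ i, 0 < n i)
    (A B : Finset ι) (hdisj : Disjoint A B)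
    (hsmall : ∀ i ∈ A ∪ B, (n i : ℝ) ≤ μ / (3 * σ2))
    (a : ι) (ha : a ∈ A) (b : ι) (hb : b ∈ B)
    (hcase : n a = n b ∨
      (n b < n a ∧
        (∑ i ∈ B, (n i : ℝ)) - (n b : ℝ) ≤ (∑ i ∈ A, (n i : ℝ)) - (n a : ℝ))) :
    (err μ σ2 n (insert a B) a < err μ σ2 n A a ∨
      err μ σ2 n (insert b A) b < err μ σ2 n B b) ∧
    ∀ P : Finpartition (Finset.univ : Finset ι),
      A ∈ P.parts → B ∈ P.parts → ¬ IndividuallyStable μ σ2 n P := by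
  obtain ⟨k, rfl⟩ : ∃ k, μ = 3 * σ2 * k := ⟨μ / (3 * σ2), by field_simp⟩
  rw [mul_div_cancel_left₀ k (by positivity)] at hsmall
  have hak : (n a : ℝ) ≤ k := hsmall a (mem_union_left B ha)
  have hbk : (n b : ℝ) ≤ k := hsmall b (mem_union_right A hb)
  have hswitch : err (3 * σ2 * k) σ2 n (insert a B) a < err (3 * σ2 * k) σ2 n A a ∨
      err (3 * σ2 * k) σ2 n (insert b A) b < err (3 * σ2 * k) σ2 n B b := by
    rcases hcase with hab | ⟨hba, hts⟩
    · rcases le_total ((∑ i ∈ B, (n i : ℝ)) - n b) ((∑ i ∈ A, (n i : ℝ)) - n a) with hts | hts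
      · exact err_insert_lt_or_err_insert_lt hσ hdisj ha hb (hn b) hab.ge hak hts
      · exact (err_insert_lt_or_err_insert_lt hσ hdisj.symm hb ha (hn a) hab.le hbk hts).symm
    · exact err_insert_lt_or_err_insert_lt hσ hdisj ha hb (hn b) hba.le hak hts
  refine ⟨hswitch, fun P hAP hBP => ?_⟩
  rcases hswitch with hlt | hlt
  · exact not_individuallyStable_of_err_insert_lt hσ hAP hBP ha (disjoint_left.mp hdisj ha)
      hak (fun i _ => hn i) (fun i hi => hsmall i (mem_union_right A hi)) hlt
  · exact not_individuallyStable_of_err_insert_lt hσ hBP hAP hb (disjoint_right.mp hdisj hb)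
      hbk (fun i _ => hn i) (fun i hi => hsmall i (mem_union_left B hi)) hlt

/-- Let `A` and `B` be disjoint nonempty coalitions in which every player has at most
`μ_e/(3σ²)` samples, and let `a ∈ A`, `b ∈ B`.  If either `n_a = n_b`, or `n_a > n_b`
and `T_A − n_a ≥ T_B − n_b`, then some player wishes to switch:
`err_a(B ∪ {a}) < err_a(A)` or `err_b(A ∪ {b}) < err_b(B)`.  Consequently (by the
welcoming lemma) no partition containing both `A` and `B` as coalitions is
individually stable. -/
theorem two_small_groups_unstable [DecidableEq ι] [Fintype ι]
    (μ σ2 : ℝ) (n : ι → ℕ) (hμ : 0 < μ) (hσ : 0 < σ2) (hn : ∀ i, 0 < n i)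
    (A B : Finset ι) (hA : A.Nonempty) (hB : B.Nonempty) (hdisj : Disjoint A B)
    (hsmall : ∀ i ∈ A ∪ B, (n i : ℝ) ≤ μ / (3 * σ2))
    (a : ι) (ha : a ∈ A) (b : ι) (hb : b ∈ B)
    (hcase : n a = n b ∨
      (n b < n a ∧
        (∑ i ∈ B, (n i : ℝ)) - (n b : ℝ) ≤ (∑ i ∈ A, (n i : ℝ)) - (n a : ℝ))) :
    (err μ σ2 n (insert a B) a < err μ σ2 n A a ∨
      err μ σ2 n (insert b A) b < err μ σ2 n B b) ∧
    ∀ P : Finpartition (Finset.univ : Finset ι),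
      A ∈ P.parts → B ∈ P.parts → ¬ IndividuallyStable μ σ2 n P :=
  two_small_groups_unstable_general μ σ2 n hσ hn A B hdisj hsmall a ha b hb hcase
end
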